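/- arXiv:1104.1902 — 3 statements merged into one kernel-verified Lean document; each statement's English description precedes it below -/
import Mathlib

section
/- The map sending an integer vector x = (x_1, ..., x_{m-1}) to the numerical semigroup generated by {m, m·x_1 + 1, ..., m·x_{m-1} + (m-1)} is a bijection between the set of solutions of the system { x_i ≥ 1 for all i; x_i + x_j - x_{i+j} ≥ 0 whenever 1 ≤ i ≤ j ≤ m-1 and i+j ≤ m-1; x_i + x_j - x_{i+j-m} ≥ -1 whenever 1 ≤ i ≤ j ≤ m-1 and i+j > m } in ℕ^{m-1} and the set of numerical semigroups with multiplicity m. -/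
/-- A numerical semigroup: a subset of ℕ containing 0, closed under addition,
with finite complement. -/
def IsNumSgp (S : Set ℕ) : Prop :=
  0 ∈ S ∧ (∀ a ∈ S, ∀ b ∈ S, a + b ∈ S) ∧ (Sᶜ).Finite

/-- Multiplicity: least positive element. -/
noncomputable def nsMult (S : Set ℕ) : ℕ := sInf {n | n ∈ S ∧ 0 < n}

/-- Frobenius number: largest integer not in S. -/
noncomputable def nsFrob (S : Set ℕ) : ℕ := sSup Sᶜ

/-- Genus: number of gaps. -/
noncomputable def nsGenus (S : Set ℕ) : ℕ := Sᶜ.ncard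

/-- Special gaps of S. -/
def nsSG (S : Set ℕ) : Set ℕ := {h | h ∉ S ∧ IsNumSgp (S ∪ {h})}

/-- Special gaps of S larger than m. -/
def nsSGm (m : ℕ) (S : Set ℕ) : Set ℕ := {h ∈ nsSG S | m < h}

/-- S is irreducible: not an intersection of two numerical semigroups properly containing it. -/
def nsIrr (S : Set ℕ) : Prop :=
  ¬ ∃ T₁ T₂ : Set ℕ, IsNumSgp T₁ ∧ IsNumSgp T₂ ∧ S ⊂ T₁ ∧ S ⊂ T₂ ∧ S = T₁ ∩ T₂

/-- S is m-irreducible: not an intersection of two numerical semigroups of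
multiplicity m properly containing it. -/
def nsMIrr (m : ℕ) (S : Set ℕ) : Prop :=
  ¬ ∃ T₁ T₂ : Set ℕ, IsNumSgp T₁ ∧ IsNumSgp T₂ ∧ nsMult T₁ = m ∧ nsMult T₂ = m ∧
      S ⊂ T₁ ∧ S ⊂ T₂ ∧ S = T₁ ∩ T₂

/-- Symmetric: irreducible with odd Frobenius number. -/
def nsSym (S : Set ℕ) : Prop := nsIrr S ∧ Odd (nsFrob S)

/-- Pseudosymmetric: irreducible with even Frobenius number. -/
def nsPseudoSym (S : Set ℕ) : Prop := nsIrr S ∧ Even (nsFrob S)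

/-- m-symmetric: m-irreducible with odd Frobenius number. -/
def nsMSym (m : ℕ) (S : Set ℕ) : Prop := nsMIrr m S ∧ Odd (nsFrob S)

/-- m-pseudosymmetric: m-irreducible with even Frobenius number. -/
def nsMPseudoSym (m : ℕ) (S : Set ℕ) : Prop := nsMIrr m S ∧ Even (nsFrob S)

/-- The numerical semigroup (submonoid) generated by a set of naturals. -/
def nsGen (A : Set ℕ) : Set ℕ := (AddSubmonoid.closure A : Set ℕ)

/-- Apéry element: least element of S congruent to i mod m. -/
noncomputable def nsApery (S : Set ℕ) (m i : ℕ) : ℕ := sInf {s | s ∈ S ∧ s % m = i % m}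

/-!
The numerical semigroup with Kunz coordinates `x` is `kunzSet m x = {n | x (n % m) ≤ n / m}`,
whose Apéry set with respect to `m` is `{m * x i + i}`. Written uniformly, the Kunz inequalities
say `x ((i + j) % m) ≤ x i + x j + (i + j) / m`, which is exactly closure of `kunzSet m x` under
addition, while `1 ≤ x i` says exactly that `m` is its least positive element. Conversely a
numerical semigroup containing `m` is determined by its Apéry set: `n ∈ S` iff the Apéry element
of `n` is at most `n`, so `S = kunzSet m x` for the coordinates `x` read off that Apéry set.
-/

def kunzSet (m : ℕ) (x : ℕ → ℕ) : Set ℕ := {n | x (n % m) ≤ n / m}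

def KunzSubadditive (m : ℕ) (x : ℕ → ℕ) : Prop :=
  ∀ i j, i < m → j < m → x ((i + j) % m) ≤ x i + x j + (i + j) / m

def kunzGenerators (m : ℕ) (x : ℕ → ℕ) : Set ℕ :=
  {m} ∪ {n : ℕ | ∃ i, 1 ≤ i ∧ i ≤ m - 1 ∧ n = m * x i + i}

noncomputable def kunzCoord (S : Set ℕ) (m : ℕ) (i : ℕ) : ℕ :=
  if i < m then nsApery S m i / m else 0

section KunzSet

variable {m : ℕ} {x : ℕ → ℕ}

theorem mem_kunzSet_iff (hm : 0 < m) {n : ℕ} :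
    n ∈ kunzSet m x ↔ m * x (n % m) + n % m ≤ n := by
  have hn := Nat.div_add_mod n m
  change x (n % m) ≤ n / m ↔ _
  rw [← Nat.mul_le_mul_left_iff hm]
  omega

theorem zero_mem_kunzSet_iff : 0 ∈ kunzSet m x ↔ x 0 = 0 := by
  simp [kunzSet]

theorem mul_add_mem_kunzSet (hm : 0 < m) {i : ℕ} (hi : i < m) : m * x i + i ∈ kunzSet m x := by
  simp [kunzSet, Nat.mul_add_div hm, Nat.mod_eq_of_lt hi, Nat.div_eq_of_lt hi]

theorem add_mul_mem_kunzSet (hm : 0 < m) {n : ℕ} (hn : n ∈ kunzSet m x) (k : ℕ) :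
    n + m * k ∈ kunzSet m x := by
  change x ((n + m * k) % m) ≤ (n + m * k) / m
  rw [Nat.add_mul_mod_self_left, Nat.add_mul_div_left _ _ hm]
  exact hn.trans (Nat.le_add_right _ _)

theorem self_mem_kunzSet (hm : 0 < m) (h0 : x 0 = 0) : m ∈ kunzSet m x := by
  simpa using add_mul_mem_kunzSet hm (zero_mem_kunzSet_iff.2 h0) 1

theorem le_of_kunzSet_subset (hm : 0 < m) {y : ℕ → ℕ} (h : kunzSet m x ⊆ kunzSet m y) {i : ℕ}
    (hi : i < m) : y i ≤ x i := by
  simpa [kunzSet, Nat.mul_add_mod, Nat.mul_add_div hm, Nat.mod_eq_of_lt hi, Nat.div_eq_of_lt hi]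
    using h (mul_add_mem_kunzSet hm hi)

theorem eq_of_kunzSet_eq (hm : 0 < m) {y : ℕ → ℕ} (h : kunzSet m x = kunzSet m y)
    (hx : ∀ i, m ≤ i → x i = 0) (hy : ∀ i, m ≤ i → y i = 0) : x = y := by
  funext i
  rcases lt_or_ge i m with hi | hi
  · exact le_antisymm (le_of_kunzSet_subset hm h.ge hi) (le_of_kunzSet_subset hm h.le hi)
  · rw [hx i hi, hy i hi]

theorem kunzSubadditive_iff_add_mem (hm : 0 < m) :
    KunzSubadditive m x ↔ ∀ a ∈ kunzSet m x, ∀ b ∈ kunzSet m x, a + b ∈ kunzSet m x := by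
  constructor
  · intro hx a ha b hb
    have hab : a + b = (a % m + b % m) + m * (a / m + b / m) := by
      nth_rewrite 1 [← Nat.mod_add_div a m, ← Nat.mod_add_div b m]
      ring
    change x (a % m) ≤ a / m at ha
    change x (b % m) ≤ b / m at hb
    change x ((a + b) % m) ≤ (a + b) / m
    rw [hab, Nat.add_mul_mod_self_left, Nat.add_mul_div_left _ _ hm]
    have := hx _ _ (Nat.mod_lt a hm) (Nat.mod_lt b hm)
    omega
  · intro hadd i j hi hj
    have hij : m * x i + i + (m * x j + j) = (i + j) + m * (x i + x j) := by ring
    have h := hadd _ (mul_add_mem_kunzSet hm hi) _ (mul_add_mem_kunzSet hm hj)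
    change x ((_ + _) % m) ≤ (_ + _) / m at h
    rw [hij, Nat.add_mul_mod_self_left, Nat.add_mul_div_left _ _ hm] at h
    omega

theorem kunzSet_compl_finite (hm : 0 < m) : (kunzSet m x)ᶜ.Finite := by
  refine (Set.finite_Iio (m * ((Finset.range m).sup x + 1))).subset fun n hn => ?_
  have hle : x (n % m) ≤ (Finset.range m).sup x :=
    Finset.le_sup (Finset.mem_range.2 (Nat.mod_lt n hm))
  have hlt : n / m < (Finset.range m).sup x := by
    change ¬ x (n % m) ≤ n / m at hn
    omega
  calc n < m * (n / m + 1) := Nat.lt_mul_div_succ n hm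
    _ ≤ m * ((Finset.range m).sup x + 1) := Nat.mul_le_mul_left m (by omega)

theorem isNumSgp_kunzSet (hm : 0 < m) (h0 : x 0 = 0) (hx : KunzSubadditive m x) :
    IsNumSgp (kunzSet m x) :=
  ⟨zero_mem_kunzSet_iff.2 h0, (kunzSubadditive_iff_add_mem hm).1 hx, kunzSet_compl_finite hm⟩

theorem nsMult_kunzSet_eq_iff (hm : 0 < m) (h0 : x 0 = 0) :
    nsMult (kunzSet m x) = m ↔ ∀ i, 0 < i → i < m → 0 < x i := by
  have hmem : m ∈ {n | n ∈ kunzSet m x ∧ 0 < n} := ⟨self_mem_kunzSet hm h0, hm⟩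
  constructor
  · intro hmult i hi0 him
    by_contra hxi
    have hi : i ∈ kunzSet m x := by simp_all [kunzSet, Nat.mod_eq_of_lt him]
    have : m ≤ i := hmult ▸ Nat.sInf_le ⟨hi, hi0⟩
    omega
  · intro hpos
    refine le_antisymm (Nat.sInf_le hmem) (le_csInf ⟨m, hmem⟩ ?_)
    rintro n ⟨hn, hn0⟩
    by_contra! hnm
    have := hpos n hn0 hnm
    simp_all [kunzSet, Nat.mod_eq_of_lt hnm, Nat.div_eq_of_lt hnm]

theorem nsGen_kunzGenerators (hm : 0 < m) (h0 : x 0 = 0) (hx : KunzSubadditive m x) :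
    nsGen (kunzGenerators m x) = kunzSet m x := by
  have hadd := (kunzSubadditive_iff_add_mem hm).1 hx
  apply subset_antisymm
  · refine AddSubmonoid.closure_le (S := ⟨⟨kunzSet m x, fun ha hb => hadd _ ha _ hb⟩,
      zero_mem_kunzSet_iff.2 h0⟩).2 ?_
    rintro n (rfl | ⟨i, hi, him, rfl⟩)
    · exact self_mem_kunzSet hm h0
    · exact mul_add_mem_kunzSet hm (by omega)
  · intro n hn
    have hm_mem : m ∈ AddSubmonoid.closure (kunzGenerators m x) :=
      AddSubmonoid.subset_closure (Or.inl rfl)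
    have hr_mem : m * x (n % m) + n % m ∈ AddSubmonoid.closure (kunzGenerators m x) := by
      rcases Nat.eq_zero_or_pos (n % m) with hr | hr
      · simp [hr, h0]
      · exact AddSubmonoid.subset_closure
          (Or.inr ⟨n % m, hr, by have := Nat.mod_lt n hm; omega, rfl⟩)
    have hn' : m * x (n % m) + n % m ≤ n := (mem_kunzSet_iff hm).1 hn
    have hsplit : n = (m * x (n % m) + n % m) + (n / m - x (n % m)) • m := by
      have := Nat.div_add_mod n m
      rw [smul_eq_mul, mul_comm _ m, Nat.mul_sub]
      omega
    rw [hsplit]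
    exact add_mem hr_mem (AddSubmonoid.nsmul_mem _ hm_mem _)

end KunzSet

section Apery

variable {S : Set ℕ} {m : ℕ}

theorem IsNumSgp.exists_forall_lt_mem (hS : IsNumSgp S) : ∃ B, ∀ n, B < n → n ∈ S := by
  obtain ⟨B, hB⟩ := hS.2.2.bddAbove
  exact ⟨B, fun n hn => by_contra fun h => (hB h).not_gt hn⟩

theorem IsNumSgp.nsmul_mem (hS : IsNumSgp S) {a : ℕ} (ha : a ∈ S) (k : ℕ) : k • a ∈ S := by
  induction k with
  | zero => simpa using hS.1
  | succ k ih => rw [succ_nsmul]; exact hS.2.1 _ ih _ ha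

theorem nsMult_mem (hS : IsNumSgp S) (hmult : nsMult S = m) : m ∈ S := by
  obtain ⟨B, hB⟩ := hS.exists_forall_lt_mem
  have hne : {n | n ∈ S ∧ 0 < n}.Nonempty := ⟨B + 1, hB _ B.lt_succ_self, B.succ_pos⟩
  exact hmult ▸ (Nat.sInf_mem hne).1

theorem nsApery_mem (hS : IsNumSgp S) (hm : 0 < m) (i : ℕ) :
    nsApery S m i ∈ S ∧ nsApery S m i % m = i % m := by
  obtain ⟨B, hB⟩ := hS.exists_forall_lt_mem
  refine Nat.sInf_mem (s := {s | s ∈ S ∧ s % m = i % m})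
    ⟨i + m * (B + 1), hB _ ?_, Nat.add_mul_mod_self_left i m (B + 1)⟩
  nlinarith

theorem nsApery_mod (i : ℕ) : nsApery S m (i % m) = nsApery S m i := by
  simp [nsApery]

theorem mem_iff_nsApery_le (hS : IsNumSgp S) (hm : 0 < m) (hmS : m ∈ S) {n : ℕ} :
    n ∈ S ↔ nsApery S m n ≤ n := by
  refine ⟨fun hn => Nat.sInf_le ⟨hn, rfl⟩, fun hle => ?_⟩
  obtain ⟨hw, hwmod⟩ := nsApery_mem hS hm n
  obtain ⟨k, hk⟩ := (Nat.modEq_iff_dvd' hle).1 hwmod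
  have hsplit : n = nsApery S m n + k • m := by
    rw [smul_eq_mul, mul_comm, ← hk]
    omega
  exact hsplit ▸ hS.2.1 _ hw _ (hS.nsmul_mem hmS k)

theorem nsApery_eq_mul_kunzCoord_add (hS : IsNumSgp S) (hm : 0 < m) {i : ℕ} (hi : i < m) :
    nsApery S m i = m * kunzCoord S m i + i := by
  have hmod := (nsApery_mem hS hm i).2
  rw [Nat.mod_eq_of_lt hi] at hmod
  rw [kunzCoord, if_pos hi]
  have := Nat.div_add_mod (nsApery S m i) m
  omega

theorem kunzSet_kunzCoord (hS : IsNumSgp S) (hm : 0 < m) (hmS : m ∈ S) :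
    kunzSet m (kunzCoord S m) = S := by
  ext n
  rw [mem_kunzSet_iff hm, mem_iff_nsApery_le hS hm hmS, ← nsApery_mod,
    nsApery_eq_mul_kunzCoord_add hS hm (Nat.mod_lt n hm)]

theorem kunzCoord_of_le (S : Set ℕ) {i : ℕ} (hi : m ≤ i) : kunzCoord S m i = 0 :=
  if_neg hi.not_gt

end Apery

section KunzSystem

variable {m : ℕ} {x : ℕ → ℕ}

theorem kunzSubadditive_of_le (h0 : x 0 = 0)
    (hlt : ∀ i j, 1 ≤ i → i ≤ j → j ≤ m - 1 → i + j ≤ m - 1 → x (i + j) ≤ x i + x j)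
    (hgt : ∀ i j, 1 ≤ i → i ≤ j → j ≤ m - 1 → m < i + j → x (i + j - m) ≤ x i + x j + 1) :
    KunzSubadditive m x := by
  intro i j hi hj
  wlog hij : i ≤ j generalizing i j
  · simpa only [add_comm i j, add_comm (x i)] using this j i hj hi (by omega)
  rcases Nat.eq_zero_or_pos i with rfl | hi0
  · simp [h0, Nat.mod_eq_of_lt hj]
  rcases lt_trichotomy (i + j) m with hlt' | heq | hgt'
  · rw [Nat.mod_eq_of_lt hlt', Nat.div_eq_of_lt hlt']
    simpa using hlt i j hi0 hij (by omega) (by omega)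
  · simp [heq, h0]
  · have hmod : (i + j) % m = i + j - m := by
      rw [Nat.mod_eq_sub_mod hgt'.le, Nat.mod_eq_of_lt (by omega)]
    have hdiv : (i + j) / m = 1 := by
      rw [Nat.div_eq_sub_div (by omega) hgt'.le, Nat.div_eq_of_lt (by omega)]
    rw [hmod, hdiv]
    exact hgt i j hi0 hij (by omega) hgt'

theorem KunzSubadditive.le_add (hx : KunzSubadditive m x) {i j : ℕ} (hij : i + j < m) :
    x (i + j) ≤ x i + x j := by
  simpa [Nat.mod_eq_of_lt hij, Nat.div_eq_of_lt hij] using hx i j (by omega) (by omega)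

theorem KunzSubadditive.le_add_add_one (hx : KunzSubadditive m x) {i j : ℕ} (hi : i < m)
    (hj : j < m) (hij : m ≤ i + j) : x (i + j - m) ≤ x i + x j + 1 := by
  have hmod : (i + j) % m = i + j - m := by
    rw [Nat.mod_eq_sub_mod hij, Nat.mod_eq_of_lt (by omega)]
  have hdiv : (i + j) / m = 1 := by
    rw [Nat.div_eq_sub_div (by omega) hij, Nat.div_eq_of_lt (by omega)]
  simpa [hmod, hdiv] using hx i j hi hj

end KunzSystem

/-- The Kunz map is a bijection between the solutions of the Kunz
system in ℕ^{m-1} (encoded as functions ℕ → ℕ vanishing outside {1,...,m-1})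
and the numerical semigroups with multiplicity m. -/
theorem stmt3 (m : ℕ) (hm : 1 ≤ m) :
    Set.BijOn
      (fun x : ℕ → ℕ =>
        nsGen ({m} ∪ {n : ℕ | ∃ i, 1 ≤ i ∧ i ≤ m - 1 ∧ n = m * x i + i}))
      {x : ℕ → ℕ |
        (∀ i, 1 ≤ i → i ≤ m - 1 → 1 ≤ x i) ∧
        (∀ i j, 1 ≤ i → i ≤ j → j ≤ m - 1 → i + j ≤ m - 1 → x (i + j) ≤ x i + x j) ∧
        (∀ i j, 1 ≤ i → i ≤ j → j ≤ m - 1 → m < i + j → x (i + j - m) ≤ x i + x j + 1) ∧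
        (∀ i, i = 0 ∨ m - 1 < i → x i = 0)}
      {S : Set ℕ | IsNumSgp S ∧ nsMult S = m} := by
  have hm0 : 0 < m := hm
  refine ⟨?_, ?_, ?_⟩
  · rintro x ⟨hpos, hlt, hgt, hout⟩
    have h0 : x 0 = 0 := hout 0 (Or.inl rfl)
    have hx := kunzSubadditive_of_le h0 hlt hgt
    show IsNumSgp (nsGen (kunzGenerators m x)) ∧ nsMult (nsGen (kunzGenerators m x)) = m
    rw [nsGen_kunzGenerators hm0 h0 hx]
    exact ⟨isNumSgp_kunzSet hm0 h0 hx,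
      (nsMult_kunzSet_eq_iff hm0 h0).2 fun i hi him => hpos i hi (by omega)⟩
  · rintro x ⟨-, hltx, hgtx, houtx⟩ y ⟨-, hlty, hgty, houty⟩ hxy
    have h0x : x 0 = 0 := houtx 0 (Or.inl rfl)
    have h0y : y 0 = 0 := houty 0 (Or.inl rfl)
    refine eq_of_kunzSet_eq hm0 ?_ (fun i hi => houtx i (by omega))
      (fun i hi => houty i (by omega))
    rw [← nsGen_kunzGenerators hm0 h0x (kunzSubadditive_of_le h0x hltx hgtx),
      ← nsGen_kunzGenerators hm0 h0y (kunzSubadditive_of_le h0y hlty hgty)]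
    exact hxy
  · rintro S ⟨hS, hmult⟩
    have hSx : kunzSet m (kunzCoord S m) = S := kunzSet_kunzCoord hS hm0 (nsMult_mem hS hmult)
    rw [← hSx] at hS hmult
    have h0 : kunzCoord S m 0 = 0 := zero_mem_kunzSet_iff.1 hS.1
    have hx := (kunzSubadditive_iff_add_mem hm0).2 hS.2.1
    have hpos := (nsMult_kunzSet_eq_iff hm0 h0).1 hmult
    refine ⟨kunzCoord S m, ⟨fun i hi him => hpos i hi (by omega),
      fun i j _ _ _ hij => hx.le_add (by omega),
      fun i j _ _ hj hij => hx.le_add_add_one (by omega) (by omega) hij.le,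
      fun i hi => hi.elim (· ▸ h0) fun hi => kunzCoord_of_le S (by omega)⟩, ?_⟩
    show nsGen (kunzGenerators m (kunzCoord S m)) = S
    rw [nsGen_kunzGenerators hm0 h0 hx, hSx]
end

section
/- A numerical semigroup S with multiplicity 3 and Kunz-coordinates vector (x_1, x_2) ∈ ℕ² is irreducible if and only if one of the following holds: (1) x_1 = x_2 = 1; (2) 2x_1 ≥ x_2 + 2 and 2x_2 ≤ x_1; (3) 2x_2 ≥ x_1 + 1 and 2x_1 ≤ x_2 + 1. -/
/-!
A numerical semigroup is irreducible iff it has at most one special gap: if `S ⊊ T`, the largest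
element of `T \ S` is a special gap of `S` lying in `T`, so two semigroups with intersection `S`
yield two distinct special gaps; conversely, special gaps `h₁ ≠ h₂` give
`S = (S ∪ {h₁}) ∩ (S ∪ {h₂})`. In multiplicity 3 the Apéry set determines `S`, and the only
candidates for special gaps are `3x₁ - 2` (present iff `2x₁ ≥ x₂ + 2`) and `3x₂ - 1` (present iff
`2x₂ ≥ x₁ + 1`); the three listed cases are exactly those in which not both are present.
-/

namespace IsNumSgp

variable {S : Set ℕ}

theorem exists_forall_lt_mem_s7 (hS : IsNumSgp S) : ∃ B, ∀ n, B < n → n ∈ S := by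
  obtain ⟨B, hB⟩ := hS.2.2.bddAbove
  exact ⟨B, fun n hn => by_contra fun h => absurd (hB h) (not_le.2 hn)⟩

theorem nsMult_mem (hS : IsNumSgp S) : nsMult S ∈ S := by
  obtain ⟨B, hB⟩ := hS.exists_forall_lt_mem_s7
  exact (Nat.sInf_mem (s := {n | n ∈ S ∧ 0 < n}) ⟨B + 1, hB _ B.lt_succ_self, B.succ_pos⟩).1

theorem mul_mem (hS : IsNumSgp S) {a : ℕ} (ha : a ∈ S) (k : ℕ) : k * a ∈ S := by
  induction k with
  | zero => simpa using hS.1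
  | succ k ih => simpa [add_mul] using hS.2.1 _ ih _ ha

theorem mem_iff_nsApery_le (hS : IsNumSgp S) {m : ℕ} (hm : 0 < m) (hmS : m ∈ S) {s : ℕ} :
    s ∈ S ↔ nsApery S m (s % m) ≤ s := by
  refine ⟨fun hs => Nat.sInf_le ⟨hs, (Nat.mod_mod s m).symm⟩, fun hle => ?_⟩
  obtain ⟨B, hB⟩ := hS.exists_forall_lt_mem_s7
  have hne : {t | t ∈ S ∧ t % m = s % m % m}.Nonempty :=
    ⟨s + (B + 1) * m, hB _ (by nlinarith), by simp⟩
  obtain ⟨hwS, hwm⟩ := Nat.sInf_mem hne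
  have hmod : nsApery S m (s % m) ≡ s [MOD m] := hwm.trans (Nat.mod_mod s m)
  have hs : s = nsApery S m (s % m) + (s - nsApery S m (s % m)) / m * m := by
    rw [Nat.div_mul_cancel ((Nat.modEq_iff_dvd' hle).1 hmod)]
    omega
  rw [hs]
  exact hS.2.1 _ hwS _ (hS.mul_mem hmS _)

theorem mem_nsSG_iff (hS : IsNumSgp S) {h : ℕ} :
    h ∈ nsSG S ↔ h ∉ S ∧ (∀ s ∈ S, 0 < s → h + s ∈ S) ∧ h + h ∈ S := by
  have hh0 : h ∉ S → 0 < h := fun hh => Nat.pos_of_ne_zero fun h0 => hh (h0 ▸ hS.1)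
  constructor
  · rintro ⟨hh, -, hcl, -⟩
    have hclS : ∀ a b, a ∈ S ∪ {h} → b ∈ S ∪ {h} → h < a + b → a + b ∈ S := fun a b ha hb hlt =>
      (hcl a ha b hb).resolve_right (ne_of_gt hlt)
    refine ⟨hh, fun s hs hs0 => hclS _ _ (.inr rfl) (.inl hs) (by omega), ?_⟩
    exact hclS _ _ (.inr rfl) (.inr rfl) (by have := hh0 hh; omega)
  · rintro ⟨hh, hhS, hhh⟩
    refine ⟨hh, .inl hS.1, ?_, hS.2.2.subset fun n hn => fun hnS => hn (.inl hnS)⟩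
    rintro a (ha | rfl) b (hb | rfl)
    · exact .inl (hS.2.1 a ha b hb)
    · rcases Nat.eq_zero_or_pos a with rfl | ha0
      · exact .inr (zero_add _)
      · exact .inl (add_comm a _ ▸ hhS a ha ha0)
    · rcases Nat.eq_zero_or_pos b with rfl | hb0
      · exact .inr (add_zero _)
      · exact .inl (hhS b hb hb0)
    · exact .inl hhh

theorem exists_mem_nsSG_of_ssubset (hS : IsNumSgp S) {T : Set ℕ} (hT : IsNumSgp T) (hST : S ⊂ T) :
    ∃ g ∈ T, g ∈ nsSG S := by
  obtain ⟨g, ⟨hgT, hgS⟩, hgmax⟩ := Set.Finite.exists_maximalFor id (T \ S)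
    (hS.2.2.subset fun _ hx => hx.2) (Set.nonempty_of_ssubset hST)
  have habove : ∀ t ∈ T, g < t → t ∈ S := fun t ht hlt =>
    by_contra fun htS => absurd (hgmax (j := t) ⟨ht, htS⟩ hlt.le) (not_le.2 hlt)
  have hg0 : 0 < g := Nat.pos_of_ne_zero fun h0 => hgS (h0 ▸ hS.1)
  refine ⟨g, hgT, (hS.mem_nsSG_iff).2 ⟨hgS, fun s hs hs0 => ?_, ?_⟩⟩
  · exact habove _ (hT.2.1 _ hgT _ (hST.subset hs)) (by omega)
  · exact habove _ (hT.2.1 _ hgT _ hgT) (by omega)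

theorem nsIrr_iff_subsingleton_nsSG (hS : IsNumSgp S) : nsIrr S ↔ (nsSG S).Subsingleton := by
  constructor
  · intro hirr h₁ hh₁ h₂ hh₂
    by_contra hne
    refine hirr ⟨S ∪ {h₁}, S ∪ {h₂}, hh₁.2, hh₂.2, ?_, ?_, ?_⟩
    · exact Set.ssubset_iff_insert.2 ⟨h₁, hh₁.1, by simp [Set.union_singleton]⟩
    · exact Set.ssubset_iff_insert.2 ⟨h₂, hh₂.1, by simp [Set.union_singleton]⟩
    · ext n
      simp only [Set.mem_inter_iff, Set.mem_union, Set.mem_singleton_iff]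
      constructor
      · exact fun hn => ⟨.inl hn, .inl hn⟩
      · rintro ⟨hn | rfl, hn' | rfl⟩ <;> first | assumption | exact absurd rfl hne
  · rintro hsub ⟨T₁, T₂, hT₁, hT₂, hST₁, hST₂, rfl⟩
    obtain ⟨g₁, hg₁T, hg₁⟩ := hS.exists_mem_nsSG_of_ssubset hT₁ hST₁
    obtain ⟨g₂, hg₂T, hg₂⟩ := hS.exists_mem_nsSG_of_ssubset hT₂ hST₂
    exact hg₁.1 ⟨hg₁T, hsub hg₁ hg₂ ▸ hg₂T⟩

end IsNumSgp

theorem nsApery_zero {S : Set ℕ} (h0 : 0 ∈ S) (m : ℕ) : nsApery S m 0 = 0 :=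
  Nat.sInf_eq_zero.2 (.inl ⟨h0, rfl⟩)

theorem notMem_of_pos_of_lt_nsMult {S : Set ℕ} {n : ℕ} (hn : 0 < n) (hlt : n < nsMult S) :
    n ∉ S :=
  fun hnS => Nat.notMem_of_lt_sInf hlt ⟨hnS, hn⟩

/-- The semigroup with Apéry set `{0, 3x₁ + 1, 3x₂ + 2}` with respect to `3`, i.e. with Kunz
coordinates `(x₁, x₂)`. -/
def kunz3 (x₁ x₂ : ℕ) : Set ℕ :=
  {s | s % 3 = 0 ∨ (s % 3 = 1 ∧ 3 * x₁ + 1 ≤ s) ∨ (s % 3 = 2 ∧ 3 * x₂ + 2 ≤ s)}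

theorem IsNumSgp.eq_kunz3 {S : Set ℕ} {x₁ x₂ : ℕ} (hS : IsNumSgp S) (h3 : 3 ∈ S)
    (h₁ : nsApery S 3 1 = 3 * x₁ + 1) (h₂ : nsApery S 3 2 = 3 * x₂ + 2) : S = kunz3 x₁ x₂ := by
  ext s
  rw [hS.mem_iff_nsApery_le three_pos h3]
  have hs : s % 3 = 0 ∨ s % 3 = 1 ∨ s % 3 = 2 := by omega
  rcases hs with hs | hs | hs <;> simp [hs, nsApery_zero hS.1, h₁, h₂, kunz3]

theorem mem_nsSG_kunz3_iff {x₁ x₂ : ℕ} (hK : IsNumSgp (kunz3 x₁ x₂)) (hx₁ : 1 ≤ x₁)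
    (hx₂ : 1 ≤ x₂) {h : ℕ} :
    h ∈ nsSG (kunz3 x₁ x₂) ↔
      (h = 3 * x₁ - 2 ∧ x₂ + 2 ≤ 2 * x₁) ∨ (h = 3 * x₂ - 1 ∧ x₁ + 1 ≤ 2 * x₂) := by
  rw [hK.mem_nsSG_iff]
  constructor
  · rintro ⟨hh, hh3, hhh⟩
    have := hh3 3 (by simp [kunz3]) three_pos
    simp only [kunz3, Set.mem_ofPred_eq] at hh this hhh
    omega
  · intro hh
    simp only [kunz3, Set.mem_ofPred_eq]
    exact ⟨by omega, fun s hs _ => by omega, by omega⟩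

theorem subsingleton_nsSG_kunz3_iff {x₁ x₂ : ℕ} (hK : IsNumSgp (kunz3 x₁ x₂)) (hx₁ : 1 ≤ x₁)
    (hx₂ : 1 ≤ x₂) :
    (nsSG (kunz3 x₁ x₂)).Subsingleton ↔ ¬(x₂ + 2 ≤ 2 * x₁ ∧ x₁ + 1 ≤ 2 * x₂) := by
  simp only [Set.Subsingleton, mem_nsSG_kunz3_iff hK hx₁ hx₂]
  constructor
  · rintro h ⟨h₁, h₂⟩
    have := h (.inl ⟨rfl, h₁⟩) (.inr ⟨rfl, h₂⟩)
    omega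
  · rintro h a (ha | ha) b (hb | hb) <;> omega

/-- irreducibility of a multiplicity-3 numerical semigroup in
terms of its Kunz coordinates. -/
theorem stmt7 (S : Set ℕ) (x1 x2 : ℕ) (hS : IsNumSgp S) (hm : nsMult S = 3)
    (h1 : nsApery S 3 1 = 3 * x1 + 1) (h2 : nsApery S 3 2 = 3 * x2 + 2) :
    nsIrr S ↔
      (x1 = 1 ∧ x2 = 1) ∨
      (2 * x1 ≥ x2 + 2 ∧ 2 * x2 ≤ x1) ∨
      (2 * x2 ≥ x1 + 1 ∧ 2 * x1 ≤ x2 + 1) := by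
  have hK : S = kunz3 x1 x2 := hS.eq_kunz3 (hm ▸ hS.nsMult_mem) h1 h2
  have h1S : 1 ∉ S := notMem_of_pos_of_lt_nsMult one_pos (by omega)
  have h2S : 2 ∉ S := notMem_of_pos_of_lt_nsMult two_pos (by omega)
  have hx1 : 1 ≤ x1 := by
    by_contra hx
    exact h1S (by rw [hK]; simp only [kunz3, Set.mem_ofPred_eq, true_and]; omega)
  have hx2 : 1 ≤ x2 := by
    by_contra hx
    exact h2S (by rw [hK]; simp only [kunz3, Set.mem_ofPred_eq, true_and]; omega)
  rw [hS.nsIrr_iff_subsingleton_nsSG, hK, subsingleton_nsSG_kunz3_iff (hK ▸ hS) hx1 hx2]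
  omega
end

section
/- Let h, d, k be positive integers with k ≤ 2 and gcd(d,3) = 1, and let S = ⟨3, 3h+d, ..., 3h+kd⟩ be the numerical semigroup generated by 3 together with the generalized arithmetic sequence 3h+d, ..., 3h+kd. Then S is irreducible if and only if k = 1, or k = 2 and h = 1. Moreover, if k = 1 then S is symmetric, and if k = 2 and h = 1 then S is pseudosymmetric. -/
/-! A numerical semigroup containing 3 is determined by the least elements `a`, `b` of its two
nonzero residue classes mod 3. Its special gaps are the gaps `x` with `x + 3` and `2x` in the
semigroup, which leaves only `a - 3` (when `b + 6 ≤ 2a`) and `b - 3` (when `a + 6 ≤ 2b`); and a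
numerical semigroup is irreducible exactly when it has at most one special gap. For
`⟨3, 3h + d⟩` (so `b = 2a`) and for `⟨3, 3h + d, 3h + 2d⟩` with `h = 1` only `b - 3` survives,
while for `⟨3, 3h + d, 3h + 2d⟩` with `h ≥ 2` both do. -/

section SpecialGaps

variable {S : Set ℕ}

lemma isNumSgp_union_singleton (hS : IsNumSgp S) {x : ℕ}
    (hadd : ∀ s ∈ S, s ≠ 0 → s + x ∈ S) (hxx : x + x ∈ S) : IsNumSgp (S ∪ {x}) := by
  refine ⟨Or.inl hS.1, ?_, hS.2.2.subset (Set.compl_subset_compl.mpr Set.subset_union_left)⟩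
  have hadd' : ∀ s ∈ S, s + x ∈ S ∪ {x} := fun s hs => by
    rcases eq_or_ne s 0 with rfl | hs0
    · exact Or.inr (zero_add x)
    · exact Or.inl (hadd s hs hs0)
  rintro s (hs | rfl) t (ht | rfl)
  · exact Or.inl (hS.2.1 s hs t ht)
  · exact hadd' s hs
  · exact add_comm t s ▸ hadd' t ht
  · exact Or.inl hxx

lemma mem_nsSG_iff (hS : IsNumSgp S) {x : ℕ} :
    x ∈ nsSG S ↔ x ∉ S ∧ (∀ s ∈ S, s ≠ 0 → s + x ∈ S) ∧ x + x ∈ S := by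
  refine ⟨fun ⟨hxS, hT⟩ => ?_, fun ⟨hxS, hadd, hxx⟩ => ⟨hxS, isNumSgp_union_singleton hS hadd hxx⟩⟩
  have hx0 : x ≠ 0 := fun hx => hxS (hx ▸ hS.1)
  have hmem : ∀ {y}, y ∈ S ∪ {x} → x < y → y ∈ S := fun hy hxy =>
    hy.resolve_right fun hyx => hxy.ne' hyx
  refine ⟨hxS, fun s hs hs0 => hmem (hT.2.1 s (Or.inl hs) x (Or.inr rfl)) (by omega), ?_⟩
  exact hmem (hT.2.1 x (Or.inr rfl) x (Or.inr rfl)) (by omega)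

/-- The largest element of `T \ S` is a special gap of `S`. -/
lemma exists_mem_nsSG_of_ssubset {T : Set ℕ} (hS : IsNumSgp S) (hT : IsNumSgp T) (hST : S ⊂ T) :
    ∃ x ∈ nsSG S, x ∈ T := by
  have hfin : (T \ S).Finite := hS.2.2.subset fun y hy => hy.2
  have hne : hfin.toFinset.Nonempty := by
    simpa using Set.nonempty_of_ssubset hST
  obtain ⟨hxT, hxS⟩ : hfin.toFinset.max' hne ∈ T \ S := by
    simpa using hfin.toFinset.max'_mem hne
  set x := hfin.toFinset.max' hne
  have hmax : ∀ y ∈ T, x < y → y ∈ S := fun y hyT hxy => by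
    by_contra hyS
    exact (hfin.toFinset.le_max' y (by simpa using And.intro hyT hyS)).not_gt hxy
  have hx0 : x ≠ 0 := fun hx => hxS (hx ▸ hS.1)
  refine ⟨x, (mem_nsSG_iff hS).2 ⟨hxS, fun s hs hs0 => ?_, ?_⟩, hxT⟩
  · exact hmax _ (hT.2.1 s (hST.1 hs) x hxT) (by omega)
  · exact hmax _ (hT.2.1 x hxT x hxT) (by omega)

theorem nsIrr_iff_subsingleton_nsSG (hS : IsNumSgp S) : nsIrr S ↔ (nsSG S).Subsingleton := by
  refine ⟨fun hirr x hx y hy => ?_, fun hsub => ?_⟩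
  · by_contra hxy
    obtain ⟨hxS, hSx⟩ := hx
    obtain ⟨hyS, hSy⟩ := hy
    refine hirr ⟨S ∪ {x}, S ∪ {y}, hSx, hSy, Set.ssubset_union_left_iff.2 (by simpa using hxS),
      Set.ssubset_union_left_iff.2 (by simpa using hyS), ?_⟩
    rw [← Set.union_inter_distrib_left, Set.singleton_inter_eq_empty.2 (by simpa using hxy),
      Set.union_empty]
  · rintro ⟨T₁, T₂, hT₁, hT₂, hST₁, hST₂, rfl⟩
    obtain ⟨x₁, hx₁, hxT₁⟩ := exists_mem_nsSG_of_ssubset hS hT₁ hST₁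
    obtain ⟨x₂, hx₂, hxT₂⟩ := exists_mem_nsSG_of_ssubset hS hT₂ hST₂
    exact hx₁.1 ⟨hxT₁, hsub hx₂ hx₁ ▸ hxT₂⟩

end SpecialGaps

/-- The numerical semigroup whose Apéry set with respect to `3` is `{0, a, b}`. -/
def sgpOfAperyThree (a b : ℕ) : Set ℕ :=
  {n | n % 3 = 0 ∨ (n % 3 = a % 3 ∧ a ≤ n) ∨ (n % 3 = b % 3 ∧ b ≤ n)}

section AperyThree

variable {a b : ℕ}

lemma mem_sgpOfAperyThree {n : ℕ} :
    n ∈ sgpOfAperyThree a b ↔ n % 3 = 0 ∨ (n % 3 = a % 3 ∧ a ≤ n) ∨ (n % 3 = b % 3 ∧ b ≤ n) :=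
  Iff.rfl

lemma isNumSgp_sgpOfAperyThree (ha : a % 3 ≠ 0) (hab : (a + b) % 3 = 0) (hb2 : b ≤ 2 * a)
    (ha2 : a ≤ 2 * b) : IsNumSgp (sgpOfAperyThree a b) := by
  refine ⟨by simp [mem_sgpOfAperyThree], fun s hs t ht => ?_, ?_⟩
  · rw [mem_sgpOfAperyThree] at *
    omega
  · refine (Set.finite_Iio (a + b)).subset fun n hn => ?_
    rw [Set.mem_compl_iff, mem_sgpOfAperyThree] at hn
    rw [Set.mem_Iio]
    omega

lemma sgpOfAperyThree_subset {M : AddSubmonoid ℕ} (h3 : 3 ∈ M) (ha : a ∈ M) (hb : b ∈ M) :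
    sgpOfAperyThree a b ⊆ M := by
  have hshift : ∀ r ∈ M, ∀ n, r ≤ n → (n - r) % 3 = 0 → n ∈ M := fun r hr n hrn hmod => by
    rw [show n = r + ((n - r) / 3) • 3 by rw [smul_eq_mul]; omega]
    exact M.add_mem hr (M.nsmul_mem h3 _)
  rintro n (h0 | ⟨hna, han⟩ | ⟨hnb, hbn⟩)
  · exact hshift 0 M.zero_mem n (Nat.zero_le n) (by omega)
  · exact hshift a ha n han (by omega)
  · exact hshift b hb n hbn (by omega)

lemma nsGen_eq_sgpOfAperyThree {A : Set ℕ} (ha : a % 3 ≠ 0) (hab : (a + b) % 3 = 0)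
    (hb2 : b ≤ 2 * a) (ha2 : a ≤ 2 * b) (h3A : 3 ∈ A) (haA : a ∈ nsGen A) (hbA : b ∈ nsGen A)
    (hA : A ⊆ sgpOfAperyThree a b) : nsGen A = sgpOfAperyThree a b := by
  have hS := isNumSgp_sgpOfAperyThree ha hab hb2 ha2
  refine subset_antisymm (fun n hn => ?_) (sgpOfAperyThree_subset
    (AddSubmonoid.subset_closure h3A) haA hbA)
  exact AddSubmonoid.closure_induction (fun x hx => hA hx) hS.1
    (fun _ _ _ _ hs ht => hS.2.1 _ hs _ ht) hn

lemma nsFrob_sgpOfAperyThree (ha : a % 3 ≠ 0) (hab : (a + b) % 3 = 0) (hle : a ≤ b)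
    (hb : 3 ≤ b) : nsFrob (sgpOfAperyThree a b) = b - 3 := by
  have ha' : a % 3 = 1 ∨ a % 3 = 2 := by omega
  refine IsGreatest.csSup_eq ⟨?_, fun n hn => ?_⟩
  · rw [Set.mem_compl_iff, mem_sgpOfAperyThree]
    omega
  · rw [Set.mem_compl_iff, mem_sgpOfAperyThree] at hn
    rcases ha' with ha' | ha' <;> omega

lemma nsSG_sgpOfAperyThree (ha : a % 3 ≠ 0) (hab : (a + b) % 3 = 0) (hb2 : b ≤ 2 * a)
    (ha2 : a ≤ 2 * b) : nsSG (sgpOfAperyThree a b) =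
      {x | (x = a - 3 ∧ b + 6 ≤ 2 * a) ∨ (x = b - 3 ∧ a + 6 ≤ 2 * b)} := by
  ext x
  rw [mem_nsSG_iff (isNumSgp_sgpOfAperyThree ha hab hb2 ha2), Set.mem_ofPred_eq]
  constructor
  · rintro ⟨hx, hadd, hxx⟩
    have hx3 := hadd 3 (by simp [mem_sgpOfAperyThree]) (by norm_num)
    rw [mem_sgpOfAperyThree] at hx hx3 hxx
    omega
  · intro hx
    refine ⟨?_, fun s hs _ => ?_, ?_⟩ <;> simp only [mem_sgpOfAperyThree] at * <;> omega

theorem nsIrr_sgpOfAperyThree_iff (ha : a % 3 ≠ 0) (hab : (a + b) % 3 = 0) (hb2 : b ≤ 2 * a)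
    (ha2 : a ≤ 2 * b) : nsIrr (sgpOfAperyThree a b) ↔ ¬(b + 6 ≤ 2 * a ∧ a + 6 ≤ 2 * b) := by
  rw [nsIrr_iff_subsingleton_nsSG (isNumSgp_sgpOfAperyThree ha hab hb2 ha2),
    nsSG_sgpOfAperyThree ha hab hb2 ha2]
  refine ⟨fun hsub ⟨hba, hab'⟩ => ?_, fun hnot x hx y hy => ?_⟩
  · have := hsub (Or.inl ⟨rfl, hba⟩ : a - 3 ∈ _) (Or.inr ⟨rfl, hab'⟩ : b - 3 ∈ _)
    omega
  · rw [Set.mem_ofPred_eq] at hx hy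
    omega

end AperyThree

section ArithSeq

variable {h d : ℕ}

lemma nsGen_three_arithSeq_one (hd : d % 3 ≠ 0) :
    nsGen ({3} ∪ (fun i => 3 * h + i * d) '' Set.Icc 1 1) =
      sgpOfAperyThree (3 * h + d) (2 * (3 * h + d)) := by
  have hgen : 3 * h + d ∈ nsGen ({3} ∪ (fun i => 3 * h + i * d) '' Set.Icc 1 1) :=
    AddSubmonoid.subset_closure (Or.inr ⟨1, by simp⟩)
  refine nsGen_eq_sgpOfAperyThree (by omega) (by omega) (by omega) (by omega) (Or.inl rfl) hgen
    (two_mul (3 * h + d) ▸ AddSubmonoid.add_mem _ hgen hgen) ?_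
  rintro x (rfl | ⟨i, ⟨hi1, hi2⟩, rfl⟩)
  · exact Or.inl rfl
  · obtain rfl : i = 1 := by omega
    simp [mem_sgpOfAperyThree]

lemma nsGen_three_arithSeq_two (hd : d % 3 ≠ 0) :
    nsGen ({3} ∪ (fun i => 3 * h + i * d) '' Set.Icc 1 2) =
      sgpOfAperyThree (3 * h + d) (3 * h + 2 * d) := by
  refine nsGen_eq_sgpOfAperyThree (by omega) (by omega) (by omega) (by omega) (Or.inl rfl)
    (AddSubmonoid.subset_closure (Or.inr ⟨1, by simp⟩))
    (AddSubmonoid.subset_closure (Or.inr ⟨2, by simp⟩)) ?_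
  rintro x (rfl | ⟨i, ⟨hi1, hi2⟩, rfl⟩)
  · exact Or.inl rfl
  · obtain rfl | rfl : i = 1 ∨ i = 2 := by omega
    all_goals simp [mem_sgpOfAperyThree]

end ArithSeq

theorem stmt8_general (h d k : ℕ) (hh : 1 ≤ h) (hk1 : 1 ≤ k) (hk2 : k ≤ 2)
    (hgcd : Nat.gcd d 3 = 1)
    (S : Set ℕ)
    (hSdef : S = nsGen ({3} ∪ (fun i => 3 * h + i * d) '' Set.Icc 1 k)) :
    (nsIrr S ↔ k = 1 ∨ (k = 2 ∧ h = 1)) ∧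
    (k = 1 → nsSym S) ∧
    (k = 2 → h = 1 → nsPseudoSym S) := by
  have hd : d % 3 ≠ 0 := fun h0 => by
    rw [Nat.gcd_eq_right (Nat.dvd_of_mod_eq_zero h0)] at hgcd
    omega
  subst hSdef
  obtain rfl | rfl : k = 1 ∨ k = 2 := by omega
  · rw [nsGen_three_arithSeq_one hd]
    have hirr : nsIrr (sgpOfAperyThree (3 * h + d) (2 * (3 * h + d))) :=
      (nsIrr_sgpOfAperyThree_iff (by omega) (by omega) (by omega) (by omega)).2 (by omega)
    refine ⟨iff_of_true hirr (Or.inl rfl), fun _ => ⟨hirr, ?_⟩, by omega⟩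
    rw [nsFrob_sgpOfAperyThree (by omega) (by omega) (by omega) (by omega), Nat.odd_iff]
    omega
  · rw [nsGen_three_arithSeq_two hd]
    have hirr : nsIrr (sgpOfAperyThree (3 * h + d) (3 * h + 2 * d)) ↔ h = 1 := by
      rw [nsIrr_sgpOfAperyThree_iff (by omega) (by omega) (by omega) (by omega)]
      omega
    refine ⟨by rw [hirr]; omega, by omega, fun _ h1 => ⟨hirr.2 h1, ?_⟩⟩
    rw [nsFrob_sgpOfAperyThree (by omega) (by omega) (by omega) (by omega), Nat.even_iff]
    omega

/-- irreducibility of a numerical semigroup generated by 3 and a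
generalized arithmetic sequence. -/
theorem stmt8 (h d k : ℕ) (hh : 1 ≤ h) (hd : 1 ≤ d) (hk1 : 1 ≤ k) (hk2 : k ≤ 2)
    (hgcd : Nat.gcd d 3 = 1)
    (S : Set ℕ)
    (hSdef : S = nsGen ({3} ∪ (fun i => 3 * h + i * d) '' Set.Icc 1 k)) :
    (nsIrr S ↔ k = 1 ∨ (k = 2 ∧ h = 1)) ∧
    (k = 1 → nsSym S) ∧
    (k = 2 → h = 1 → nsPseudoSym S) :=
  stmt8_general h d k hh hk1 hk2 hgcd S hSdef
end
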